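/- Let L be a flat bounded lattice and let d₁, d₂, d₃ ∈ L \ {⊥, ⊤} be pairwise distinct. Let μ(x, y, z) denote the majority term (y ⊔ z) ⊓ (z ⊔ x) ⊓ (x ⊔ y). Then for every a ∈ L: μ(a ⊓ d₁, a ⊓ d₂, a ⊓ d₃) equals ⊤ if a = ⊤, and equals ⊥ otherwise. In other words, the unary polynomial function a ↦ μ(a ⊓ d₁, a ⊓ d₂, a ⊓ d₃) is the monotone characteristic function of {⊤}. -/

import Mathlib

universe u

open scoped Classical

section Flat

variable {L : Type u} [Lattice L] [BoundedOrder L]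

theorem sup_eq_top_of_flat (hflat : ∀ a b : L, a ≤ b → a = ⊥ ∨ b = ⊤ ∨ a = b) {x y : L}
    (hx : x ≠ ⊥) (hxt : x ≠ ⊤) (hy : y ≠ ⊥) (hxy : x ≠ y) : x ⊔ y = ⊤ := by
  rcases hflat x (x ⊔ y) le_sup_left with h | h | h
  · exact absurd h hx
  · exact h
  · rcases hflat y x (h ▸ le_sup_right) with h' | h' | h'
    · exact absurd h' hy
    · exact absurd h' hxt
    · exact absurd h'.symm hxy

theorem inf_eq_bot_of_flat (hflat : ∀ a b : L, a ≤ b → a = ⊥ ∨ b = ⊤ ∨ a = b) {a d : L}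
    (ha : a ≠ ⊤) (hd : d ≠ ⊤) (hda : d ≠ a) : a ⊓ d = ⊥ := by
  rcases hflat (a ⊓ d) d inf_le_right with h | h | h
  · exact h
  · exact absurd h hd
  · rcases hflat d a (h ▸ inf_le_left) with h' | h' | h'
    · rw [h', inf_bot_eq]
    · exact absurd h' ha
    · exact absurd h' hda

end Flat

theorem stmt12_general {L : Type u} [Lattice L] [BoundedOrder L]
    (hflat : ∀ a b : L, a ≤ b → a = ⊥ ∨ b = ⊤ ∨ a = b)
    (d₁ d₂ d₃ : L)
    (hd₁ : d₁ ∉ ({⊥, ⊤} : Set L)) (hd₂ : d₂ ∉ ({⊥, ⊤} : Set L))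
    (hd₃ : d₃ ∉ ({⊥, ⊤} : Set L))
    (h12 : d₁ ≠ d₂) (h13 : d₁ ≠ d₃) (h23 : d₂ ≠ d₃)
    (a : L) :
    (((a ⊓ d₂) ⊔ (a ⊓ d₃)) ⊓ ((a ⊓ d₃) ⊔ (a ⊓ d₁))) ⊓ ((a ⊓ d₁) ⊔ (a ⊓ d₂)) =
      if a = ⊤ then ⊤ else ⊥ := by
  simp only [Set.mem_insert_iff, Set.mem_singleton_iff, not_or] at hd₁ hd₂ hd₃
  split_ifs with ha
  · subst ha
    simp only [top_inf_eq]
    rw [sup_eq_top_of_flat hflat hd₂.1 hd₂.2 hd₃.1 h23,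
      sup_eq_top_of_flat hflat hd₃.1 hd₃.2 hd₁.1 h13.symm,
      sup_eq_top_of_flat hflat hd₁.1 hd₁.2 hd₂.1 h12, inf_idem, inf_idem]
  · -- at most one `dᵢ` equals `a`, and every other `a ⊓ dᵢ` is `⊥`
    have meet_eq_bot {d : L} (hd : d ≠ ⊤) (hda : d ≠ a) : a ⊓ d = ⊥ :=
      inf_eq_bot_of_flat hflat ha hd hda
    by_cases h₁ : d₁ = a
    · subst h₁
      simp [meet_eq_bot hd₂.2 h12.symm, meet_eq_bot hd₃.2 h13.symm]
    by_cases h₂ : d₂ = a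
    · subst h₂
      simp [meet_eq_bot hd₁.2 h12, meet_eq_bot hd₃.2 h23.symm]
    · simp [meet_eq_bot hd₁.2 h₁, meet_eq_bot hd₂.2 h₂]

/-- In a flat bounded lattice, the unary polynomial `a ↦ μ(a ⊓ d₁, a ⊓ d₂, a ⊓ d₃)`,
where `μ(x, y, z) = (y ⊔ z) ⊓ (z ⊔ x) ⊓ (x ⊔ y)` and `d₁, d₂, d₃ ∉ {⊥, ⊤}` are
pairwise distinct, is the monotone characteristic function of `{⊤}`. -/
theorem stmt12 {L : Type u} [Lattice L] [BoundedOrder L]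
    (hbt : (⊥ : L) ≠ ⊤)
    (hflat : ∀ a b : L, a ≤ b → a = ⊥ ∨ b = ⊤ ∨ a = b)
    (d₁ d₂ d₃ : L)
    (hd₁ : d₁ ∉ ({⊥, ⊤} : Set L)) (hd₂ : d₂ ∉ ({⊥, ⊤} : Set L))
    (hd₃ : d₃ ∉ ({⊥, ⊤} : Set L))
    (h12 : d₁ ≠ d₂) (h13 : d₁ ≠ d₃) (h23 : d₂ ≠ d₃)
    (a : L) :
    (((a ⊓ d₂) ⊔ (a ⊓ d₃)) ⊓ ((a ⊓ d₃) ⊔ (a ⊓ d₁))) ⊓ ((a ⊓ d₁) ⊔ (a ⊓ d₂)) =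
      if a = ⊤ then ⊤ else ⊥ :=
  stmt12_general hflat d₁ d₂ d₃ hd₁ hd₂ hd₃ h12 h13 h23 a
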